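/- (Reparametrization identity) Let ((b_i), (b_a)) be an interior stationary point of the Bethe free energy of a factor graph G arising from a positive BP fixed point. Then for all x ∈ X^N: ∏_{a∈F} f_a(x_{∂a}) ∏_{i∈V} h_i(x_i) = Z_Bethe · ∏_{a∈F} [b_a(x_{∂a}) / ∏_{i∈∂a} b_i(x_i)] · ∏_{i∈V} b_i(x_i); consequently Z(G) = Z_Bethe · Σ_{x∈X^N} ∏_{a∈F} [b_a(x_{∂a})/∏_{i∈∂a} b_i(x_i)] ∏_{i∈V} b_i(x_i). -/

import Mathlib

open Finset

noncomputable section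

variable {V F X : Type*} [Fintype V] [Fintype F] [Fintype X]
  [DecidableEq V] [DecidableEq F] [DecidableEq X]

/-- The factor neighbors of a variable node `i`. -/
def nbrs (N : F → Finset V) (i : V) : Finset F := Finset.univ.filter (fun a => i ∈ N a)

/-- The edge set of the factor graph, as a finset of pairs. -/
def edges (N : F → Finset V) : Finset (V × F) := Finset.univ.filter (fun p => p.1 ∈ N p.2)

/-- The BP normalizer `Z_a = ∑_{x_{∂a}} f_a(x_{∂a}) ∏_{i ∈ ∂a} m_{i→a}(x_i)`. -/
def Za (N : F → Finset V) (f : (a : F) → ({i // i ∈ N a} → X) → ℝ)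
    (mva : V → F → X → ℝ) (a : F) : ℝ :=
  ∑ xa : {i // i ∈ N a} → X, f a xa * ∏ i : {i // i ∈ N a}, mva i.1 a (xa i)

/-- The BP normalizer `Z_i = ∑_x h_i(x) ∏_{a ∈ ∂i} m_{a→i}(x)`. -/
def Zi (N : F → Finset V) (h : V → X → ℝ) (mav : V → F → X → ℝ) (i : V) : ℝ :=
  ∑ x : X, h i x * ∏ a ∈ nbrs N i, mav i a x

/-- The BP normalizer `Z_{i,a} = ∑_x m_{i→a}(x) m_{a→i}(x)`. -/
def Zia (mva mav : V → F → X → ℝ) (i : V) (a : F) : ℝ :=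
  ∑ x : X, mva i a x * mav i a x

/-- The Bethe partition function `Z_Bethe = ∏_a Z_a ∏_i Z_i ∏_{(i,a) ∈ E} Z_{i,a}⁻¹`. -/
def ZBethe (N : F → Finset V) (f : (a : F) → ({i // i ∈ N a} → X) → ℝ)
    (h : V → X → ℝ) (mva mav : V → F → X → ℝ) : ℝ :=
  (∏ a : F, Za N f mva a) * (∏ i : V, Zi N h mav i) *
  ∏ p ∈ edges N, (Zia mva mav p.1 p.2)⁻¹

/-- The factor pseudo-marginal `b_a(x_{∂a}) = f_a(x_{∂a}) ∏_{i ∈ ∂a} m_{i→a}(x_i) / Z_a`. -/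
def bfa (N : F → Finset V) (f : (a : F) → ({i // i ∈ N a} → X) → ℝ)
    (mva : V → F → X → ℝ) (a : F) (xa : {i // i ∈ N a} → X) : ℝ :=
  f a xa * (∏ i : {i // i ∈ N a}, mva i.1 a (xa i)) / Za N f mva a

/-- The variable pseudo-marginal `b_i(x) = h_i(x) ∏_{a ∈ ∂i} m_{a→i}(x) / Z_i`. -/
def bvi (N : F → Finset V) (h : V → X → ℝ) (mav : V → F → X → ℝ) (i : V) (x : X) : ℝ :=
  h i x * (∏ a ∈ nbrs N i, mav i a x) / Zi N h mav i

/-! At a BP fixed point the update `m_{i→a} ∝ h_i ∏_{a' ∈ ∂i \ a} m_{a'→i}` gives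
`m_{i→a} m_{a→i} = Z_{i,a} b_i` on every edge. In `∏_a b_a` every message `m_{i→a}` occurs once
per edge, and in `∏_i b_i` every message `m_{a→i}` does, so together they produce
`∏_{(i,a)} Z_{i,a} b_i(x_i)`; dividing by `∏_a ∏_{i ∈ ∂a} b_i(x_i)` leaves exactly
`∏_a f_a ∏_i h_i / Z_Bethe`. If some `Z_a` vanishes, then `f_a ≡ 0` and `Z_Bethe = 0`, so both
sides are `0`. -/

section Edges

variable {M : Type*} [CommMonoid M] (N : F → Finset V)

omit [Fintype V] [DecidableEq F] in
@[simp]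
theorem mem_nbrs {i : V} {a : F} : a ∈ nbrs N i ↔ i ∈ N a := by
  simp [nbrs]

omit [DecidableEq F] in
theorem mem_edges {p : V × F} : p ∈ edges N ↔ p.1 ∈ N p.2 := by
  simp [edges]

omit [DecidableEq F] in
theorem prod_edges_eq_prod_factors (g : V × F → M) :
    ∏ p ∈ edges N, g p = ∏ a : F, ∏ i : {i // i ∈ N a}, g (i.1, a) := by
  rw [edges, prod_filter, Fintype.prod_prod_type, prod_comm]
  refine prod_congr rfl fun a _ => ?_
  rw [← prod_filter]
  exact prod_subtype _ (fun i => by simp) fun i => g (i, a)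

omit [DecidableEq F] in
theorem prod_edges_eq_prod_variables (g : V × F → M) :
    ∏ p ∈ edges N, g p = ∏ i : V, ∏ a ∈ nbrs N i, g (i, a) := by
  rw [edges, prod_filter, Fintype.prod_prod_type]
  exact prod_congr rfl fun i _ => (prod_filter _ _).symm

end Edges

section Marginals

variable (N : F → Finset V) (f : (a : F) → ({i // i ∈ N a} → X) → ℝ) (h : V → X → ℝ)
  (mva mav : V → F → X → ℝ)

omit [Fintype V] [Fintype X] [DecidableEq F] [DecidableEq X] in
theorem prod_nbrs_mav_pos (hm2 : ∀ i a, i ∈ N a → ∀ x, 0 < mav i a x) (i : V) (x : X) :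
    0 < ∏ a ∈ nbrs N i, mav i a x :=
  prod_pos fun a ha => hm2 i a ((mem_nbrs N).1 ha) x

omit [Fintype V] [DecidableEq F] [DecidableEq X] in
theorem Zi_pos [Nonempty X] (hh : ∀ i x, 0 < h i x) (hm2 : ∀ i a, i ∈ N a → ∀ x, 0 < mav i a x)
    (i : V) : 0 < Zi N h mav i :=
  sum_pos (fun x _ => mul_pos (hh i x) (prod_nbrs_mav_pos N mav hm2 i x)) univ_nonempty

omit [Fintype V] [DecidableEq F] [DecidableEq X] in
theorem bvi_pos (hh : ∀ i x, 0 < h i x) (hm2 : ∀ i a, i ∈ N a → ∀ x, 0 < mav i a x)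
    (i : V) (x : X) : 0 < bvi N h mav i x :=
  have : Nonempty X := ⟨x⟩
  div_pos (mul_pos (hh i x) (prod_nbrs_mav_pos N mav hm2 i x)) (Zi_pos N h mav hh hm2 i)

omit [Fintype V] [Fintype F] [DecidableEq V] [DecidableEq F] [DecidableEq X] in
theorem Zia_pos [Nonempty X] {i : V} {a : F} (hm1 : ∀ x, 0 < mva i a x)
    (hm2 : ∀ x, 0 < mav i a x) : 0 < Zia mva mav i a :=
  sum_pos (fun x _ => mul_pos (hm1 x) (hm2 x)) univ_nonempty

omit [Fintype V] [DecidableEq X] in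
/-- Summing `m_{i→a} m_{a→i} = c h_i ∏_{a' ∈ ∂i} m_{a'→i}` over `x` gives `Z_{i,a} = c Z_i`. -/
theorem mva_mul_mav_eq_Zia_mul_bvi {i : V} {a : F} (hia : i ∈ N a) (hZi : Zi N h mav i ≠ 0)
    (hfix : ∃ c : ℝ, ∀ x, mva i a x = c * (h i x * ∏ a' ∈ (nbrs N i).erase a, mav i a' x))
    (x : X) : mva i a x * mav i a x = Zia mva mav i a * bvi N h mav i x := by
  obtain ⟨c, hc⟩ := hfix
  have hprod : ∀ z, mva i a z * mav i a z = c * (h i z * ∏ a' ∈ nbrs N i, mav i a' z) := by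
    intro z
    rw [hc z, ← prod_erase_mul _ _ ((mem_nbrs N).2 hia)]
    ring
  have hZia : Zia mva mav i a = c * Zi N h mav i := by
    simp only [Zia, Zi, hprod, mul_sum]
  rw [hprod x, hZia, bvi]
  field_simp

omit [DecidableEq X] in
theorem prod_edges_mva_mul_mav (hZi : ∀ i, Zi N h mav i ≠ 0)
    (hfix : ∀ i a, i ∈ N a → ∃ c : ℝ, ∀ x,
      mva i a x = c * (h i x * ∏ a' ∈ (nbrs N i).erase a, mav i a' x)) (x : V → X) :
    (∏ p ∈ edges N, mva p.1 p.2 (x p.1)) * ∏ p ∈ edges N, mav p.1 p.2 (x p.1)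
      = (∏ p ∈ edges N, Zia mva mav p.1 p.2) * ∏ p ∈ edges N, bvi N h mav p.1 (x p.1) := by
  rw [← prod_mul_distrib, ← prod_mul_distrib]
  refine prod_congr rfl fun p hp => ?_
  have hp : p.1 ∈ N p.2 := (mem_edges N).1 hp
  exact mva_mul_mav_eq_Zia_mul_bvi N h mva mav hp (hZi p.1) (hfix p.1 p.2 hp) (x p.1)

omit [DecidableEq F] [DecidableEq X] in
theorem prod_bfa (x : V → X) :
    ∏ a : F, bfa N f mva a (fun i => x i.1)
      = (∏ a : F, f a (fun i => x i.1)) * (∏ p ∈ edges N, mva p.1 p.2 (x p.1)) /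
          ∏ a : F, Za N f mva a := by
  simp only [bfa]
  rw [prod_div_distrib, prod_mul_distrib, prod_edges_eq_prod_factors]

omit [DecidableEq F] [DecidableEq X] in
theorem prod_bvi (x : V → X) :
    ∏ i : V, bvi N h mav i (x i)
      = (∏ i : V, h i (x i)) * (∏ p ∈ edges N, mav p.1 p.2 (x p.1)) /
          ∏ i : V, Zi N h mav i := by
  simp only [bvi]
  rw [prod_div_distrib, prod_mul_distrib, prod_edges_eq_prod_variables]

omit [Fintype V] [Fintype F] [DecidableEq F] [DecidableEq X] in
theorem f_eq_zero_of_Za_eq_zero {a : F} (hf : ∀ xa, 0 ≤ f a xa)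
    (hm1 : ∀ i ∈ N a, ∀ x, 0 < mva i a x) (hZa : Za N f mva a = 0)
    (xa : {i // i ∈ N a} → X) : f a xa = 0 := by
  have hprod : 0 < ∏ i : {i // i ∈ N a}, mva i.1 a (xa i) :=
    prod_pos fun i _ => hm1 i.1 i.2 (xa i)
  have hterms := (sum_eq_zero_iff_of_nonneg fun xa _ =>
    mul_nonneg (hf xa) (prod_pos fun i _ => hm1 i.1 i.2 (xa i)).le).1 hZa xa (mem_univ xa)
  exact (mul_eq_zero.1 hterms).resolve_right hprod.ne'

omit [DecidableEq X] in
theorem prod_f_mul_prod_h_eq_ZBethe_mul_of_Za_ne_zero (hh : ∀ i x, 0 < h i x)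
    (hm1 : ∀ i a, i ∈ N a → ∀ x, 0 < mva i a x) (hm2 : ∀ i a, i ∈ N a → ∀ x, 0 < mav i a x)
    (hfix : ∀ i a, i ∈ N a → ∃ c : ℝ, ∀ x,
      mva i a x = c * (h i x * ∏ a' ∈ (nbrs N i).erase a, mav i a' x))
    (hZa : ∀ a, Za N f mva a ≠ 0) (x : V → X) :
    (∏ a : F, f a (fun i => x i.1)) * ∏ i : V, h i (x i)
      = ZBethe N f h mva mav *
          ((∏ a : F, bfa N f mva a (fun i => x i.1) /
              ∏ i : {i // i ∈ N a}, bvi N h mav i.1 (x i.1)) *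
            ∏ i : V, bvi N h mav i (x i)) := by
  have hZi : ∀ i, Zi N h mav i ≠ 0 := fun i =>
    have : Nonempty X := ⟨x i⟩
    (Zi_pos N h mav hh hm2 i).ne'
  have hZia : ∏ p ∈ edges N, Zia mva mav p.1 p.2 ≠ 0 := prod_ne_zero_iff.2 fun p hp =>
    have : Nonempty X := ⟨x p.1⟩
    have hp := (mem_edges N).1 hp
    (Zia_pos mva mav (hm1 _ _ hp) (hm2 _ _ hp)).ne'
  have hbvi : ∏ p ∈ edges N, bvi N h mav p.1 (x p.1) ≠ 0 :=
    prod_ne_zero_iff.2 fun p _ => (bvi_pos N h mav hh hm2 p.1 (x p.1)).ne'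
  have hZa' : ∏ a, Za N f mva a ≠ 0 := prod_ne_zero_iff.2 fun a _ => hZa a
  have hZi' : ∏ i, Zi N h mav i ≠ 0 := prod_ne_zero_iff.2 fun i _ => hZi i
  rw [ZBethe, prod_div_distrib, prod_bfa, prod_bvi, prod_inv_distrib,
    ← prod_edges_eq_prod_factors N fun p => bvi N h mav p.1 (x p.1)]
  field_simp
  linear_combination (-((∏ a : F, f a (fun i => x i.1)) * ∏ i : V, h i (x i))) *
    prod_edges_mva_mul_mav N h mva mav hZi hfix x

omit [DecidableEq X] in
theorem prod_f_mul_prod_h_eq_ZBethe_mul (hh : ∀ i x, 0 < h i x) (hf : ∀ a xa, 0 ≤ f a xa)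
    (hm1 : ∀ i a, i ∈ N a → ∀ x, 0 < mva i a x) (hm2 : ∀ i a, i ∈ N a → ∀ x, 0 < mav i a x)
    (hfix : ∀ i a, i ∈ N a → ∃ c : ℝ, ∀ x,
      mva i a x = c * (h i x * ∏ a' ∈ (nbrs N i).erase a, mav i a' x)) (x : V → X) :
    (∏ a : F, f a (fun i => x i.1)) * ∏ i : V, h i (x i)
      = ZBethe N f h mva mav *
          ((∏ a : F, bfa N f mva a (fun i => x i.1) /
              ∏ i : {i // i ∈ N a}, bvi N h mav i.1 (x i.1)) *
            ∏ i : V, bvi N h mav i (x i)) := by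
  by_cases hZa : ∀ a, Za N f mva a ≠ 0
  · exact prod_f_mul_prod_h_eq_ZBethe_mul_of_Za_ne_zero N f h mva mav hh hm1 hm2 hfix hZa x
  · obtain ⟨a, hZa⟩ := not_forall_not.1 hZa
    have hfa := f_eq_zero_of_Za_eq_zero N f mva (hf a) (fun i hi => hm1 i a hi) hZa
    rw [ZBethe, prod_eq_zero (mem_univ a) hZa, prod_eq_zero (mem_univ a) (hfa _)]
    ring

end Marginals

theorem reparametrization_identity_general
    (N : F → Finset V)
    (f : (a : F) → ({i // i ∈ N a} → X) → ℝ)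
    (h : V → X → ℝ)
    (mva mav : V → F → X → ℝ)
    (hh : ∀ i x, 0 < h i x)
    (hf : ∀ a xa, 0 ≤ f a xa)
    (hm1 : ∀ (i : V) (a : F), i ∈ N a → ∀ x, 0 < mva i a x)
    (hm2 : ∀ (i : V) (a : F), i ∈ N a → ∀ x, 0 < mav i a x)
    (hfix1 : ∀ (i : V) (a : F), i ∈ N a → ∃ c : ℝ, 0 < c ∧ ∀ x,
      mva i a x = c * (h i x * ∏ a' ∈ (nbrs N i).erase a, mav i a' x)) :
    (∀ x : V → X,
      (∏ a : F, f a (fun i => x i.1)) * ∏ i : V, h i (x i)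
        = ZBethe N f h mva mav *
          ((∏ a : F, bfa N f mva a (fun i => x i.1) /
              ∏ i : {i // i ∈ N a}, bvi N h mav i.1 (x i.1)) *
            ∏ i : V, bvi N h mav i (x i))) ∧
    (∑ x : V → X, (∏ a : F, f a (fun i => x i.1)) * ∏ i : V, h i (x i)
      = ZBethe N f h mva mav *
        ∑ x : V → X,
          (∏ a : F, bfa N f mva a (fun i => x i.1) /
              ∏ i : {i // i ∈ N a}, bvi N h mav i.1 (x i.1)) *
            ∏ i : V, bvi N h mav i (x i)) := by
  have pointwise := prod_f_mul_prod_h_eq_ZBethe_mul N f h mva mav hh hf hm1 hm2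
    fun i a hia => (hfix1 i a hia).imp fun _ hc => hc.2
  exact ⟨pointwise, by rw [mul_sum]; exact sum_congr rfl fun x _ => pointwise x⟩

/-- **reparametrization identity.**  At an interior stationary point of the
Bethe free energy coming from a positive BP fixed point,
`∏_a f_a(x_{∂a}) ∏_i h_i(x_i) = Z_Bethe ∏_a [b_a(x_{∂a})/∏_{i∈∂a} b_i(x_i)] ∏_i b_i(x_i)`
for all `x`, and consequently
`Z(G) = Z_Bethe ∑_x ∏_a [b_a(x_{∂a})/∏_{i∈∂a} b_i(x_i)] ∏_i b_i(x_i)`. -/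
theorem reparametrization_identity
    (N : F → Finset V)
    (f : (a : F) → ({i // i ∈ N a} → X) → ℝ)
    (h : V → X → ℝ)
    (mva mav : V → F → X → ℝ)
    (hh : ∀ i x, 0 < h i x)
    (hf : ∀ a xa, 0 ≤ f a xa)
    (hslice : ∀ (a : F) (i : {i // i ∈ N a}) (z : X),
      ∃ xa : {i // i ∈ N a} → X, xa i = z ∧ 0 < f a xa)
    (hm1 : ∀ (i : V) (a : F), i ∈ N a → ∀ x, 0 < mva i a x)
    (hm2 : ∀ (i : V) (a : F), i ∈ N a → ∀ x, 0 < mav i a x)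
    (hfix1 : ∀ (i : V) (a : F), i ∈ N a → ∃ c : ℝ, 0 < c ∧ ∀ x,
      mva i a x = c * (h i x * ∏ a' ∈ (nbrs N i).erase a, mav i a' x))
    (hfix2 : ∀ (i : V) (a : F) (hia : i ∈ N a), ∃ c : ℝ, 0 < c ∧ ∀ x,
      mav i a x = c * ∑ xa ∈ Finset.univ.filter
          (fun xa : {j // j ∈ N a} → X => xa ⟨i, hia⟩ = x),
        f a xa * ∏ j ∈ Finset.univ.erase (⟨i, hia⟩ : {j // j ∈ N a}), mva j.1 a (xa j)) :
    (∀ x : V → X,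
      (∏ a : F, f a (fun i => x i.1)) * ∏ i : V, h i (x i)
        = ZBethe N f h mva mav *
          ((∏ a : F, bfa N f mva a (fun i => x i.1) /
              ∏ i : {i // i ∈ N a}, bvi N h mav i.1 (x i.1)) *
            ∏ i : V, bvi N h mav i (x i))) ∧
    (∑ x : V → X, (∏ a : F, f a (fun i => x i.1)) * ∏ i : V, h i (x i)
      = ZBethe N f h mva mav *
        ∑ x : V → X,
          (∏ a : F, bfa N f mva a (fun i => x i.1) /
              ∏ i : {i // i ∈ N a}, bvi N h mav i.1 (x i.1)) *
            ∏ i : V, bvi N h mav i (x i)) :=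
  reparametrization_identity_general N f h mva mav hh hf hm1 hm2 hfix1
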